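/- Let m ≥ 2 and let I ⊂ C^∞(ℝ, ℂ²) be the span of the 2m functions: xʲ e₁ for j = 0,…,m-2, and m xᵏ e₂ - k x^{k-1} e₁ for k = 0,…,m (where e₁ = (1,0)ᵀ, e₂ = (0,1)ᵀ). Then I is invariant under the operator Q₊ψ(x) = x²ψ'(x) + (σ₃ x + S₊ - (m-1)x)ψ(x), where S₊ = (iσ₂+σ₁)/2. -/
import Mathlib


def σ2 : Matrix (Fin 2) (Fin 2) ℂ := !![0, -Complex.I; Complex.I, 0]
def σ3 : Matrix (Fin 2) (Fin 2) ℂ := !![1, 0; 0, -1]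
def σ1 : Matrix (Fin 2) (Fin 2) ℂ := !![0, 1; 1, 0]

noncomputable def Sp : Matrix (Fin 2) (Fin 2) ℂ := (1/2 : ℂ) • (Complex.I • σ2 + σ1)

def e1 : Fin 2 → ℂ := ![1, 0]
def e2 : Fin 2 → ℂ := ![0, 1]

/-- The basis functions of the invariant space: xʲ e₁ (j = 0,…,m-2) and
m xᵏ e₂ - k x^{k-1} e₁ (k = 0,…,m). -/
def basisSet (m : ℕ) : Set (ℝ → Fin 2 → ℂ) :=
  {f | (∃ j : ℕ, j + 2 ≤ m ∧ f = fun (x : ℝ) => ((x : ℂ) ^ j) • e1) ∨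
       (∃ k : ℕ, k ≤ m ∧ f = fun (x : ℝ) =>
          ((m : ℂ) * (x : ℂ) ^ k) • e2 - ((k : ℂ) * (x : ℂ) ^ (k - 1)) • e1)}

/-- Q₊ψ(x) = x²ψ'(x) + (σ₃x + S₊ - (m-1)x)ψ(x). -/
noncomputable def Qp (m : ℕ) : (ℝ → Fin 2 → ℂ) → (ℝ → Fin 2 → ℂ) :=
  fun ψ x => ((x : ℂ) ^ 2) • deriv ψ x +
    ((x : ℂ) • σ3 + Sp - (((m : ℂ) - 1) * (x : ℂ)) • 1).mulVec (ψ x)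

lemma hasDerivAt_cpow (j : ℕ) (x : ℝ) :
    HasDerivAt (fun x : ℝ => ((x:ℂ))^j) ((j:ℂ) * (x:ℂ)^(j-1)) x :=
  (hasDerivAt_pow j (x:ℂ)).comp_ofReal

lemma hasDerivAt_b1 (j : ℕ) (x : ℝ) :
    HasDerivAt (fun x : ℝ => ((x:ℂ)^j) • e1) (((j:ℂ) * (x:ℂ)^(j-1)) • e1) x :=
  (hasDerivAt_cpow j x).smul_const e1

lemma hasDerivAt_b2 (m k : ℕ) (x : ℝ) :
    HasDerivAt (fun x : ℝ => ((m:ℂ) * (x:ℂ)^k) • e2 - ((k:ℂ) * (x:ℂ)^(k-1)) • e1)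
      (((m:ℂ) * ((k:ℂ) * (x:ℂ)^(k-1))) • e2 -
        ((k:ℂ) * (((k-1:ℕ):ℂ) * (x:ℂ)^(k-1-1))) • e1) x :=
  (((hasDerivAt_cpow k x).const_mul (m:ℂ)).smul_const e2).sub
    (((hasDerivAt_cpow (k-1) x).const_mul (k:ℂ)).smul_const e1)

lemma Qp_b1 (m j : ℕ) :
    Qp m (fun x : ℝ => ((x:ℂ)^j) • e1) =
      ((j:ℂ) + 2 - (m:ℂ)) • (fun x : ℝ => ((x:ℂ)^(j+1)) • e1) := by
  funext x
  simp only [Qp, (hasDerivAt_b1 j x).deriv]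
  funext i
  fin_cases i <;>
    simp [Sp, σ1, σ2, σ3, e1, e2, Matrix.mulVec, dotProduct,
      Fin.sum_univ_two, Matrix.one_apply] <;>
    cases j with
    | zero => push_cast; ring
    | succ n => push_cast [pow_succ]; ring

lemma Qp_b2 (m k : ℕ) :
    Qp m (fun x : ℝ => ((m:ℂ) * (x:ℂ)^k) • e2 - ((k:ℂ) * (x:ℂ)^(k-1)) • e1) =
      ((k:ℂ) - (m:ℂ)) •
        (fun x : ℝ => ((m:ℂ) * (x:ℂ)^(k+1)) • e2 - (((k:ℂ)+1) * (x:ℂ)^k) • e1) := by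
  funext x
  simp only [Qp, (hasDerivAt_b2 m k x).deriv]
  funext i
  fin_cases i <;>
    simp [Sp, σ1, σ2, σ3, e1, e2, Matrix.mulVec, dotProduct,
      Fin.sum_univ_two, Matrix.one_apply] <;>
    rcases k with _ | _ | n
  · push_cast; ring
  · push_cast; ring
  · push_cast [pow_succ]; ring
  · push_cast; ring
  · push_cast; ring
  · push_cast [pow_succ]; ring

lemma Qp_add (m : ℕ) {ψ φ : ℝ → Fin 2 → ℂ} (hψ : Differentiable ℝ ψ)
    (hφ : Differentiable ℝ φ) : Qp m (ψ + φ) = Qp m ψ + Qp m φ := by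
  funext x
  have hd : deriv (ψ + φ) x = deriv ψ x + deriv φ x :=
    ((hψ x).hasDerivAt.add (hφ x).hasDerivAt).deriv
  simp only [Qp, Pi.add_apply, hd, Matrix.mulVec_add, smul_add]
  abel

lemma Qp_smul (m : ℕ) (c : ℂ) {ψ : ℝ → Fin 2 → ℂ} (hψ : Differentiable ℝ ψ) :
    Qp m (c • ψ) = c • Qp m ψ := by
  funext x
  have hd : deriv (c • ψ) x = c • deriv ψ x := ((hψ x).hasDerivAt.const_smul c).deriv
  simp only [Qp, Pi.smul_apply, hd, Matrix.mulVec_smul, smul_add, smul_comm (_ ^ 2) c]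

lemma Qp_zero (m : ℕ) : Qp m 0 = 0 := by
  funext x
  have hd : deriv (0 : ℝ → Fin 2 → ℂ) x = 0 :=
    deriv_const x (0 : Fin 2 → ℂ)
  simp [Qp, hd]

theorem stmt_14 (m : ℕ) (hm : 2 ≤ m) :
    ∀ ψ ∈ Submodule.span ℂ (basisSet m),
      Qp m ψ ∈ Submodule.span ℂ (basisSet m) := by
  have key : ∀ ψ ∈ Submodule.span ℂ (basisSet m),
      Differentiable ℝ ψ ∧ Qp m ψ ∈ Submodule.span ℂ (basisSet m) := by
    intro ψ hψ
    induction hψ using Submodule.span_induction with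
    | mem f hf =>
      rcases hf with ⟨j, hj, rfl⟩ | ⟨k, hk, rfl⟩
      · refine ⟨fun x => (hasDerivAt_b1 j x).differentiableAt, ?_⟩
        rw [Qp_b1]
        by_cases h : j + 1 + 2 ≤ m
        · exact Submodule.smul_mem _ _ (Submodule.subset_span (Or.inl ⟨j + 1, h, rfl⟩))
        · have hmj : m = j + 2 := le_antisymm (by omega) hj
          have : ((j : ℂ) + 2 - (m : ℂ)) = 0 := by rw [hmj]; push_cast; ring
          rw [this, zero_smul]
          exact Submodule.zero_mem _
      · refine ⟨fun x => (hasDerivAt_b2 m k x).differentiableAt, ?_⟩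
        rw [Qp_b2]
        by_cases h : k + 1 ≤ m
        · refine Submodule.smul_mem _ _ (Submodule.subset_span (Or.inr ⟨k + 1, h, ?_⟩))
          funext x
          norm_num
        · have hkm : k = m := by omega
          have : ((k : ℂ) - (m : ℂ)) = 0 := by rw [hkm]; ring
          rw [this, zero_smul]
          exact Submodule.zero_mem _
    | zero => exact ⟨differentiable_const _, by rw [Qp_zero]; exact Submodule.zero_mem _⟩
    | add f g _ _ hf hg =>
      exact ⟨hf.1.add hg.1, by rw [Qp_add m hf.1 hg.1]; exact Submodule.add_mem _ hf.2 hg.2⟩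
    | smul c f _ hf =>
      exact ⟨hf.1.const_smul c, by rw [Qp_smul m c hf.1]; exact Submodule.smul_mem _ _ hf.2⟩
  exact fun ψ hψ => (key ψ hψ).2
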